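/- Let C ⊆ ℕ be a cohesive set and let A = (ℕ, ≺) be a computable linear order that is order-isomorphic to (ℕ, <) and whose successor function (the total function mapping each element to its ≺-immediate successor) is computable. Then the cohesive power Π_C A is order-isomorphic to ℕ + ℚ ×ₗ ℤ. -/

import Mathlib

/-- `X ⊆* Y`: `X` is contained in `Y` up to finitely many elements. -/
def AlmostSubset (X Y : Set ℕ) : Prop := (X \ Y).Finite

/-- `W ⊆ ℕ` is computably enumerable: it is the domain of a partial computable function. -/
def CESet (W : Set ℕ) : Prop := ∃ f : ℕ →. ℕ, Partrec f ∧ W = f.Dom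

/-- `W ⊆ ℕ` is computable (decidable). -/
def ComputableSet (W : Set ℕ) : Prop :=
  ∃ f : ℕ → Bool, Computable f ∧ ∀ n, n ∈ W ↔ f n = true

/-- `C ⊆ ℕ` is cohesive: `C` is infinite, and for every c.e. set `W`, either `W ∩ C`
or `Wᶜ ∩ C` is finite. -/
def Cohesive (C : Set ℕ) : Prop :=
  C.Infinite ∧ ∀ W : Set ℕ, CESet W → (W ∩ C).Finite ∨ (Wᶜ ∩ C).Finite

/-- `C ⊆ ℕ` is r-cohesive. -/
def RCohesive (C : Set ℕ) : Prop :=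
  C.Infinite ∧ ∀ W : Set ℕ, ComputableSet W → (W ∩ C).Finite ∨ (Wᶜ ∩ C).Finite

/-- `C` is co-maximal: its complement is maximal, i.e. `C` is cohesive with c.e. complement. -/
def CoMaximal (C : Set ℕ) : Prop := Cohesive C ∧ CESet Cᶜ

/-- A computable (decidable) binary relation on `ℕ`. -/
def ComputableRel (r : ℕ → ℕ → Prop) : Prop :=
  ∃ f : ℕ → ℕ → Bool, Computable₂ f ∧ ∀ m n, r m n ↔ f m n = true

/-- `y` is the immediate successor of `x` with respect to the strict order `r`. -/
def ImmSucc {α : Type*} (r : α → α → Prop) (x y : α) : Prop :=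
  r x y ∧ ∀ z, ¬(r x z ∧ r z y)

/-- A strict order on `ℕ` has order type ω when it is isomorphic to `(ℕ, <)`. -/
def OrderTypeOmega (r : ℕ → ℕ → Prop) : Prop :=
  Nonempty (r ≃r ((· < ·) : ℕ → ℕ → Prop))

/-- Carrier of the cohesive power: partial computable functions whose domain
almost contains `C`. -/
def CohCarrier (C : Set ℕ) : Type :=
  {φ : ℕ →. ℕ // Partrec φ ∧ (C \ φ.Dom).Finite}

/-- Two partial functions agree (are defined and equal) on almost all of `C`. -/
def eqAE (C : Set ℕ) (φ ψ : ℕ →. ℕ) : Prop :=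
  (C \ {n | ∃ a, a ∈ φ n ∧ a ∈ ψ n}).Finite

/-- The equivalence relation underlying the cohesive power. -/
def cohSetoid (C : Set ℕ) : Setoid (CohCarrier C) where
  r φ ψ := eqAE C φ.1 ψ.1
  iseqv := by
    constructor
    · intro φ
      refine φ.2.2.subset fun n hn => ⟨hn.1, fun hd => hn.2 ?_⟩
      obtain ⟨a, ha⟩ := (PFun.mem_dom _ _).mp hd
      exact ⟨a, ha, ha⟩
    · intro φ ψ h
      exact h.subset fun n hn => ⟨hn.1, fun ⟨a, h1, h2⟩ => hn.2 ⟨a, h2, h1⟩⟩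
    · intro φ ψ χ h1 h2
      refine (h1.union h2).subset fun n hn => ?_
      by_cases hmem : ∃ a, a ∈ φ.1 n ∧ a ∈ ψ.1 n
      · obtain ⟨a, ha1, ha2⟩ := hmem
        refine Or.inr ⟨hn.1, fun ⟨b, hb1, hb2⟩ => hn.2 ⟨a, ha1, ?_⟩⟩
        rwa [Part.mem_unique ha2 hb1]
      · exact Or.inl ⟨hn.1, hmem⟩

/-- The domain of the cohesive power of a computable structure on `ℕ` over `C`. -/
def CohPow (C : Set ℕ) : Type := Quotient (cohSetoid C)

/-- The class of a partial computable function in the cohesive power. -/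
def CohPow.mk {C : Set ℕ} (φ : CohCarrier C) : CohPow C := Quotient.mk (cohSetoid C) φ

/-- `φ(n) ≺ ψ(n)` (both defined) for almost all `n ∈ C`. -/
def ltAE (C : Set ℕ) (r : ℕ → ℕ → Prop) (φ ψ : ℕ →. ℕ) : Prop :=
  (C \ {n | ∃ a b, a ∈ φ n ∧ b ∈ ψ n ∧ r a b}).Finite

/-- The order of the cohesive power of the computable linear order `(ℕ, r)` over `C`. -/
def CohPow.Lt (C : Set ℕ) (r : ℕ → ℕ → Prop) (x y : CohPow C) : Prop :=
  ∃ φ ψ : CohCarrier C, x = CohPow.mk φ ∧ y = CohPow.mk ψ ∧ ltAE C r φ.1 ψ.1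

/-- The sum `L₀ + L₁` of two linear orders on `ℕ`, coded on `ℕ` via the computable
pairing `⟨0, l⟩ ↦ 2l`, `⟨1, l⟩ ↦ 2l + 1`. -/
def sumRel (r₀ r₁ : ℕ → ℕ → Prop) (m n : ℕ) : Prop :=
  (m % 2 = 0 ∧ n % 2 = 1) ∨
  (m % 2 = 0 ∧ n % 2 = 0 ∧ r₀ (m / 2) (n / 2)) ∨
  (m % 2 = 1 ∧ n % 2 = 1 ∧ r₁ (m / 2) (n / 2))

/-- The lexicographic product `L₀ ×ₗ L₁` (first coordinate dominant) of two linear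
orders on `ℕ`, coded on `ℕ` via the computable pairing `Nat.pair`. -/
def lexRel (r₀ r₁ : ℕ → ℕ → Prop) (m n : ℕ) : Prop :=
  r₀ m.unpair.1 n.unpair.1 ∨ (m.unpair.1 = n.unpair.1 ∧ r₁ m.unpair.2 n.unpair.2)

/-- The strict order of `ℕ + ℚ ×ₗ ℤ`. -/
def NQZlt : ℕ ⊕ ℚ × ℤ → ℕ ⊕ ℚ × ℤ → Prop :=
  Sum.Lex (· < ·) (Prod.Lex (· < ·) (· < ·))

/-- The element of the cohesive power represented by the constant function `k`. -/
def constElt (C : Set ℕ) (k : ℕ) : CohPow C :=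
  CohPow.mk ⟨fun _ => Part.some k, Partrec.const' (Part.some k), by
    have : (PFun.Dom fun _ : ℕ => Part.some k) = Set.univ := by
      ext n; simp [PFun.Dom]
    rw [this, Set.diff_univ]; exact Set.finite_empty⟩

/-- The element of the cohesive power represented by the identity function. -/
def idElt (C : Set ℕ) : CohPow C :=
  CohPow.mk ⟨fun n => Part.some n, Partrec.some, by
    have : (PFun.Dom fun n : ℕ => Part.some n) = Set.univ := by
      ext n; simp [PFun.Dom]
    rw [this, Set.diff_univ]; exact Set.finite_empty⟩

section CohAux

open Part

/-- `p` holds almost everywhere on `C`. -/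
def AEC (C : Set ℕ) (p : ℕ → Prop) : Prop := (C \ {n | p n}).Finite

lemma AEC.mono {C : Set ℕ} {p q : ℕ → Prop} (h : AEC C p) (hpq : ∀ n, p n → q n) :
    AEC C q :=
  h.subset fun n hn => ⟨hn.1, fun hp => hn.2 (hpq n hp)⟩

lemma AEC.and {C : Set ℕ} {p q : ℕ → Prop} (hp : AEC C p) (hq : AEC C q) :
    AEC C fun n => p n ∧ q n := by
  refine (hp.union hq).subset fun n hn => ?_
  by_cases h : p n
  · exact Or.inr ⟨hn.1, fun hqn => hn.2 ⟨h, hqn⟩⟩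
  · exact Or.inl ⟨hn.1, h⟩

lemma AEC.of_all {C : Set ℕ} {p : ℕ → Prop} (h : ∀ n, p n) : AEC C p := by
  have : C \ {n | p n} = ∅ := by
    ext n; simp [h]
  rw [AEC, this]; exact Set.finite_empty

lemma AEC.exists {C : Set ℕ} (hC : Cohesive C) {p : ℕ → Prop} (h : AEC C p) :
    ∃ n ∈ C, p n := by
  obtain ⟨n, hn⟩ := (hC.1.diff h).nonempty
  refine ⟨n, hn.1, by_contra fun hp => hn.2 ⟨hn.1, hp⟩⟩

lemma AEC.finsetAll {C : Set ℕ} {ι : Type*} (s : Finset ι) {p : ι → ℕ → Prop}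
    (h : ∀ i ∈ s, AEC C (p i)) : AEC C fun n => ∀ i ∈ s, p i n := by
  classical
  induction s using Finset.induction_on with
  | empty => exact AEC.of_all (by simp)
  | @insert a s' hx ih =>
      have h1 := h a (Finset.mem_insert_self a s')
      have h2 := ih fun i hi => h i (Finset.mem_insert_of_mem hi)
      refine (h1.and h2).mono fun n hn i hi => ?_
      rcases Finset.mem_insert.mp hi with rfl | hi
      · exact hn.1
      · exact hn.2 i hi

lemma AEC.ce_dichotomy {C : Set ℕ} (hC : Cohesive C) {W : Set ℕ} (hW : CESet W) :
    AEC C (· ∈ W) ∨ AEC C (· ∉ W) := by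
  rcases hC.2 W hW with h | h
  · exact Or.inr (h.subset fun n hn => ⟨not_not.mp hn.2, hn.1⟩)
  · exact Or.inl (h.subset fun n hn => ⟨hn.2, hn.1⟩)

lemma ceSet_rel {φ ψ : ℕ →. ℕ} (hφ : Partrec φ) (hψ : Partrec ψ) {R : ℕ → ℕ → Bool}
    (hR : Computable₂ R) :
    CESet {n | ∃ a b, a ∈ φ n ∧ b ∈ ψ n ∧ R a b = true} := by
  refine ⟨fun n => (φ n).bind fun a => (ψ n).bind fun b =>
    ((cond (R a b) (Option.some 0) Option.none : Option ℕ) : Part ℕ), ?_, ?_⟩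
  · have hinner : Computable fun q : (ℕ × ℕ) × ℕ =>
        (cond (R q.1.2 q.2) (Option.some 0) Option.none : Option ℕ) :=
      Computable.cond (hR.comp (Computable.snd.comp Computable.fst) Computable.snd)
        (Computable.const _) (Computable.const _)
    exact hφ.bind (((hψ.comp Computable.fst).bind hinner.ofOption.to₂).to₂)
  · ext n
    constructor
    · rintro ⟨a, b, ha, hb, hab⟩
      refine (PFun.mem_dom _ _).mpr ?_
      refine ⟨0, ?_⟩
      rw [Part.mem_bind_iff]
      exact ⟨a, ha, Part.mem_bind_iff.mpr ⟨b, hb, by simp [hab]⟩⟩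
    · intro h
      replace h := (PFun.mem_dom _ _).mp h
      obtain ⟨y, hy⟩ := h
      rw [Part.mem_bind_iff] at hy
      obtain ⟨a, ha, hy⟩ := hy
      rw [Part.mem_bind_iff] at hy
      obtain ⟨b, hb, hy⟩ := hy
      refine ⟨a, b, ha, hb, ?_⟩
      cases h : R a b with
      | true => rfl
      | false => rw [h] at hy; simp at hy

end CohAux
section CohAux2

open Part

variable {C : Set ℕ}

lemma mk_eq_iff {φ ψ : CohCarrier C} :
    CohPow.mk φ = CohPow.mk ψ ↔ AEC C fun n => ∃ a, a ∈ φ.1 n ∧ a ∈ ψ.1 n :=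
  ⟨fun h => Quotient.exact h, fun h => Quotient.sound h⟩

lemma exists_mk (x : CohPow C) : ∃ φ, x = CohPow.mk φ :=
  ⟨Quotient.out x, (Quotient.out_eq x).symm⟩

lemma domAEC (φ : CohCarrier C) : AEC C fun n => (φ.1 n).Dom := φ.2.2

lemma ltAE_iff {r : ℕ → ℕ → Prop} {φ ψ : ℕ →. ℕ} :
    ltAE C r φ ψ ↔ AEC C fun n => ∃ a b, a ∈ φ n ∧ b ∈ ψ n ∧ r a b := Iff.rfl

lemma ltAE_congr {r : ℕ → ℕ → Prop} {φ φ' ψ ψ' : CohCarrier C}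
    (h1 : CohPow.mk φ = CohPow.mk φ') (h2 : CohPow.mk ψ = CohPow.mk ψ')
    (h : ltAE C r φ.1 ψ.1) : ltAE C r φ'.1 ψ'.1 := by
  rw [mk_eq_iff] at h1 h2
  rw [ltAE_iff] at h ⊢
  refine ((h.and h1).and h2).mono ?_
  rintro n ⟨⟨⟨a, b, ha, hb, hr⟩, ⟨a', ha1, ha2⟩⟩, ⟨b', hb1, hb2⟩⟩
  rw [Part.mem_unique ha ha1] at hr
  rw [Part.mem_unique hb hb1] at hr
  exact ⟨a', b', ha2, hb2, hr⟩

lemma lt_mk_iff {r : ℕ → ℕ → Prop} {φ ψ : CohCarrier C} :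
    CohPow.Lt C r (CohPow.mk φ) (CohPow.mk ψ) ↔ ltAE C r φ.1 ψ.1 := by
  constructor
  · rintro ⟨φ₀, ψ₀, hx, hy, h⟩
    exact ltAE_congr hx.symm hy.symm h
  · intro h
    exact ⟨φ, ψ, rfl, rfl, h⟩

/-- Push a computable total function through a carrier. -/
def mapC (h : ℕ → ℕ) (hh : Computable h) (φ : CohCarrier C) : CohCarrier C :=
  ⟨fun n => (φ.1 n).map h, φ.2.1.map (hh.comp Computable.snd).to₂, by
    refine φ.2.2.subset fun n hn => ⟨hn.1, fun hd => hn.2 ?_⟩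
    obtain ⟨a, ha⟩ := Part.dom_iff_mem.mp hd
    exact Part.dom_iff_mem.mpr ⟨h a, Part.mem_map h ha⟩⟩

lemma mem_mapC {h : ℕ → ℕ} {hh : Computable h} {φ : CohCarrier C} {n a} :
    a ∈ (mapC h hh φ).1 n ↔ ∃ b ∈ φ.1 n, h b = a := Part.mem_map_iff h

/-- Push a binary computable total function through two carriers. -/
def map2C (h : ℕ → ℕ → ℕ) (hh : Computable₂ h) (φ ψ : CohCarrier C) : CohCarrier C :=
  ⟨fun n => (φ.1 n).bind fun a => (ψ.1 n).map (h a),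
   φ.2.1.bind (((ψ.2.1.comp Computable.fst).map
      ((hh.comp (Computable.snd.comp Computable.fst) Computable.snd).to₂)).to₂), by
    refine ((domAEC φ).and (domAEC ψ)).subset fun n hn => ⟨hn.1, fun hd => hn.2 ?_⟩
    obtain ⟨hd1, hd2⟩ := hd
    obtain ⟨a, ha⟩ := Part.dom_iff_mem.mp hd1
    obtain ⟨b, hb⟩ := Part.dom_iff_mem.mp hd2
    exact Part.dom_iff_mem.mpr ⟨h a b, Part.mem_bind_iff.mpr ⟨a, ha, Part.mem_map (h a) hb⟩⟩⟩

lemma mem_map2C {h : ℕ → ℕ → ℕ} {hh : Computable₂ h} {φ ψ : CohCarrier C} {n c} :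
    c ∈ (map2C h hh φ ψ).1 n ↔ ∃ a ∈ φ.1 n, ∃ b ∈ ψ.1 n, h a b = c := by
  show c ∈ (φ.1 n).bind _ ↔ _
  rw [Part.mem_bind_iff]
  constructor
  · rintro ⟨a, ha, hc⟩
    obtain ⟨b, hb, hbc⟩ := (Part.mem_map_iff _).mp hc
    exact ⟨a, ha, b, hb, hbc⟩
  · rintro ⟨a, ha, b, hb, hbc⟩
    exact ⟨a, ha, (Part.mem_map_iff _).mpr ⟨b, hb, hbc⟩⟩

lemma mapC_congr {h : ℕ → ℕ} {hh : Computable h} {φ ψ : CohCarrier C}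
    (e : CohPow.mk φ = CohPow.mk ψ) : CohPow.mk (mapC h hh φ) = CohPow.mk (mapC h hh ψ) := by
  rw [mk_eq_iff] at e ⊢
  refine e.mono ?_
  rintro n ⟨a, ha, hb⟩
  exact ⟨h a, mem_mapC.mpr ⟨a, ha, rfl⟩, mem_mapC.mpr ⟨a, hb, rfl⟩⟩

/-- Push a computable total function through the cohesive power. -/
def mapP (h : ℕ → ℕ) (hh : Computable h) (x : CohPow C) : CohPow C := by
  refine Quotient.map (fun φ => mapC h hh φ) ?_ x
  intro a b hab
  exact mk_eq_iff.mp (mapC_congr (Quotient.sound hab))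

lemma mapP_mk {h : ℕ → ℕ} {hh : Computable h} {φ : CohCarrier C} :
    mapP h hh (CohPow.mk φ) = CohPow.mk (mapC h hh φ) := rfl

/-- The master dichotomy. -/
lemma dichotomyR (hC : Cohesive C) (φ ψ : CohCarrier C) (R : ℕ → ℕ → Bool)
    (hR : Computable₂ R) :
    AEC C (fun n => ∃ a b, a ∈ φ.1 n ∧ b ∈ ψ.1 n ∧ R a b = true) ∨
    AEC C (fun n => ∀ a b, a ∈ φ.1 n → b ∈ ψ.1 n → R a b = false) := by
  rcases AEC.ce_dichotomy hC (ceSet_rel φ.2.1 ψ.2.1 hR) with h | h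
  · exact Or.inl h
  · refine Or.inr (h.mono ?_)
    intro n hn a b ha hb
    by_contra hab
    exact hn ⟨a, b, ha, hb, by simpa using hab⟩

end CohAux2
section CohAux3

open Part

variable {C : Set ℕ}

lemma lt_mono {p q : ℕ → ℕ → Prop} {x y : CohPow C} (h : ∀ a b, p a b → q a b)
    (hxy : CohPow.Lt C p x y) : CohPow.Lt C q x y := by
  obtain ⟨φ, ψ, hx, hy, hl⟩ := hxy
  refine ⟨φ, ψ, hx, hy, ?_⟩
  exact AEC.mono hl fun n ⟨a, b, ha, hb, hp⟩ => ⟨a, b, ha, hb, h a b hp⟩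

lemma lt_and {p q : ℕ → ℕ → Prop} {x y : CohPow C}
    (hp : CohPow.Lt C p x y) (hq : CohPow.Lt C q x y) :
    CohPow.Lt C (fun a b => p a b ∧ q a b) x y := by
  obtain ⟨φ, rfl⟩ := exists_mk x
  obtain ⟨ψ, rfl⟩ := exists_mk y
  rw [lt_mk_iff] at hp hq ⊢
  refine AEC.mono (AEC.and hp hq) ?_
  rintro n ⟨⟨a, b, ha, hb, h1⟩, ⟨a', b', ha', hb', h2⟩⟩
  rw [Part.mem_unique ha' ha, Part.mem_unique hb' hb] at h2
  exact ⟨a, b, ha, hb, h1, h2⟩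

lemma lt_of_all {p : ℕ → ℕ → Prop} (h : ∀ a b, p a b) (x y : CohPow C) :
    CohPow.Lt C p x y := by
  obtain ⟨φ, rfl⟩ := exists_mk x
  obtain ⟨ψ, rfl⟩ := exists_mk y
  rw [lt_mk_iff]
  refine AEC.mono (AEC.and (domAEC φ) (domAEC ψ)) ?_
  rintro n ⟨h1, h2⟩
  obtain ⟨a, ha⟩ := Part.dom_iff_mem.mp h1
  obtain ⟨b, hb⟩ := Part.dom_iff_mem.mp h2
  exact ⟨a, b, ha, hb, h a b⟩

lemma lt_exists (hC : Cohesive C) {p : ℕ → ℕ → Prop} {x y : CohPow C}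
    (h : CohPow.Lt C p x y) : ∃ a b, p a b := by
  obtain ⟨φ, ψ, hx, hy, hl⟩ := h
  obtain ⟨n, _, a, b, _, _, hp⟩ := AEC.exists hC hl
  exact ⟨a, b, hp⟩

lemma lt_flip {p : ℕ → ℕ → Prop} {x y : CohPow C} :
    CohPow.Lt C p x y ↔ CohPow.Lt C (fun a b => p b a) y x := by
  constructor <;>
  · rintro ⟨φ, ψ, hx, hy, hl⟩
    exact ⟨ψ, φ, hy, hx, AEC.mono hl fun n ⟨a, b, ha, hb, hp⟩ => ⟨b, a, hb, ha, hp⟩⟩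

lemma lt_comp {p q : ℕ → ℕ → Prop} {x y z : CohPow C}
    (hp : CohPow.Lt C p x y) (hq : CohPow.Lt C q y z) :
    CohPow.Lt C (fun a c => ∃ b, p a b ∧ q b c) x z := by
  obtain ⟨φ, rfl⟩ := exists_mk x
  obtain ⟨ψ, rfl⟩ := exists_mk y
  obtain ⟨χ, rfl⟩ := exists_mk z
  rw [lt_mk_iff] at hp hq ⊢
  refine AEC.mono (AEC.and hp hq) ?_
  rintro n ⟨⟨a, b, ha, hb, h1⟩, ⟨b', c, hb', hc, h2⟩⟩
  rw [Part.mem_unique hb' hb] at h2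
  exact ⟨a, c, ha, hc, b, h1, h2⟩

lemma eq_iff_ltEq {x y : CohPow C} : x = y ↔ CohPow.Lt C (fun a b => a = b) x y := by
  obtain ⟨φ, rfl⟩ := exists_mk x
  obtain ⟨ψ, rfl⟩ := exists_mk y
  rw [lt_mk_iff, mk_eq_iff]
  constructor
  · exact fun h => AEC.mono h fun n ⟨a, h1, h2⟩ => ⟨a, a, h1, h2, rfl⟩
  · exact fun h => AEC.mono h fun n ⟨a, b, h1, h2, he⟩ => ⟨a, h1, he ▸ h2⟩

lemma lt_map_left {p : ℕ → ℕ → Prop} {h : ℕ → ℕ} {hh : Computable h} {x y : CohPow C} :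
    CohPow.Lt C p (mapP h hh x) y ↔ CohPow.Lt C (fun a b => p (h a) b) x y := by
  obtain ⟨φ, rfl⟩ := exists_mk x
  obtain ⟨ψ, rfl⟩ := exists_mk y
  rw [mapP_mk, lt_mk_iff, lt_mk_iff]
  constructor
  · intro hl
    refine AEC.mono hl ?_
    rintro n ⟨a, b, ha, hb, hp⟩
    obtain ⟨a', ha', rfl⟩ := mem_mapC.mp ha
    exact ⟨a', b, ha', hb, hp⟩
  · intro hl
    refine AEC.mono hl ?_
    rintro n ⟨a, b, ha, hb, hp⟩
    exact ⟨h a, b, mem_mapC.mpr ⟨a, ha, rfl⟩, hb, hp⟩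

lemma lt_map_right {p : ℕ → ℕ → Prop} {h : ℕ → ℕ} {hh : Computable h} {x y : CohPow C} :
    CohPow.Lt C p x (mapP h hh y) ↔ CohPow.Lt C (fun a b => p a (h b)) x y := by
  rw [lt_flip, lt_map_left, ← lt_flip]

/-- The carrier of the constant function. -/
def constC (C : Set ℕ) (k : ℕ) : CohCarrier C :=
  ⟨fun _ => Part.some k, Partrec.const' (Part.some k), by
    have : (PFun.Dom fun _ : ℕ => Part.some k) = Set.univ := by
      ext n; simp [PFun.Dom]
    rw [this, Set.diff_univ]; exact Set.finite_empty⟩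

lemma constElt_eq (k : ℕ) : constElt C k = CohPow.mk (constC C k) := rfl

lemma lt_const_right {p : ℕ → ℕ → Prop} {k : ℕ} {x : CohPow C} :
    CohPow.Lt C p x (constElt C k) ↔ CohPow.Lt C (fun a _ => p a k) x x := by
  obtain ⟨φ, rfl⟩ := exists_mk x
  rw [constElt_eq, lt_mk_iff, lt_mk_iff]
  constructor
  · intro hl
    refine AEC.mono hl ?_
    rintro n ⟨a, b, ha, hb, hp⟩
    rw [show b = k from Part.mem_some_iff.mp hb] at hp
    exact ⟨a, a, ha, ha, hp⟩
  · intro hl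
    refine AEC.mono hl ?_
    rintro n ⟨a, _, ha, _, hp⟩
    exact ⟨a, k, ha, Part.mem_some k, hp⟩

lemma lt_const_left {p : ℕ → ℕ → Prop} {k : ℕ} {x : CohPow C} :
    CohPow.Lt C p (constElt C k) x ↔ CohPow.Lt C (fun _ b => p k b) x x := by
  rw [lt_flip (x := constElt C k), lt_const_right]
  exact lt_flip

lemma lt_finsetAll {ι : Type*} (s : Finset ι) {p : ι → ℕ → ℕ → Prop} {x y : CohPow C}
    (h : ∀ i ∈ s, CohPow.Lt C (p i) x y) :
    CohPow.Lt C (fun a b => ∀ i ∈ s, p i a b) x y := by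
  obtain ⟨φ, rfl⟩ := exists_mk x
  obtain ⟨ψ, rfl⟩ := exists_mk y
  rw [lt_mk_iff]
  have hall : AEC C fun n => ∀ i ∈ s, ∃ a b, a ∈ φ.1 n ∧ b ∈ ψ.1 n ∧ p i a b :=
    AEC.finsetAll s fun i hi => lt_mk_iff.mp (h i hi)
  refine AEC.mono (AEC.and (AEC.and (domAEC φ) (domAEC ψ)) hall) ?_
  rintro n ⟨⟨h1, h2⟩, hall⟩
  obtain ⟨a, ha⟩ := Part.dom_iff_mem.mp h1
  obtain ⟨b, hb⟩ := Part.dom_iff_mem.mp h2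
  refine ⟨a, b, ha, hb, fun i hi => ?_⟩
  obtain ⟨a', b', ha', hb', hp⟩ := hall i hi
  rwa [Part.mem_unique ha' ha, Part.mem_unique hb' hb] at hp

lemma lt_dec (hC : Cohesive C) (x y : CohPow C) (R : ℕ → ℕ → Bool) (hR : Computable₂ R) :
    CohPow.Lt C (fun a b => R a b = true) x y ∨ CohPow.Lt C (fun a b => R a b = false) x y := by
  obtain ⟨φ, rfl⟩ := exists_mk x
  obtain ⟨ψ, rfl⟩ := exists_mk y
  rcases dichotomyR hC φ ψ R hR with h | h
  · exact Or.inl (lt_mk_iff.mpr h)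
  · refine Or.inr (lt_mk_iff.mpr ?_)
    refine AEC.mono (AEC.and (AEC.and (domAEC φ) (domAEC ψ)) h) ?_
    rintro n ⟨⟨h1, h2⟩, hfa⟩
    obtain ⟨a, ha⟩ := Part.dom_iff_mem.mp h1
    obtain ⟨b, hb⟩ := Part.dom_iff_mem.mp h2
    exact ⟨a, b, ha, hb, hfa a b ha hb⟩

end CohAux3
section CohAux4

open Part

variable {C : Set ℕ}

-- computability facts
lemma cdec_lt : Computable₂ fun a b : ℕ => decide (a < b) := Primrec.nat_lt.decide.to_comp

lemma cdec_eq : Computable₂ fun a b : ℕ => decide (a = b) := Primrec.eq.decide.to_comp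

lemma cdec_eq_add (j : ℕ) : Computable₂ fun a b : ℕ => decide (b = a + j) :=
  (Primrec.eq.comp₂ Primrec₂.right
    (Primrec.nat_add.comp₂ Primrec₂.left (Primrec₂.const j))).decide.to_comp

lemma cAdd (j : ℕ) : Computable fun a : ℕ => a + j :=
  (Primrec.nat_add.comp Primrec.id (Primrec.const j)).to_comp

lemma cSub (j : ℕ) : Computable fun a : ℕ => a - j :=
  (Primrec.nat_sub.comp Primrec.id (Primrec.const j)).to_comp

lemma cHalf : Computable fun a : ℕ => a / 2 :=
  (Primrec.nat_div.comp Primrec.id (Primrec.const 2)).to_comp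

lemma cDbl : Computable fun a : ℕ => 2 * a :=
  (Primrec.nat_mul.comp (Primrec.const 2) Primrec.id).to_comp

lemma cAvg : Computable₂ fun a b : ℕ => (a + b) / 2 :=
  (Primrec.nat_div.comp₂ Primrec.nat_add (Primrec₂.const 2)).to_comp

lemma map2C_congr {h : ℕ → ℕ → ℕ} {hh : Computable₂ h} {φ φ' ψ ψ' : CohCarrier C}
    (e1 : CohPow.mk φ = CohPow.mk φ') (e2 : CohPow.mk ψ = CohPow.mk ψ') :
    CohPow.mk (map2C h hh φ ψ) = CohPow.mk (map2C h hh φ' ψ') := by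
  rw [mk_eq_iff] at e1 e2 ⊢
  refine (e1.and e2).mono ?_
  rintro n ⟨⟨a, ha1, ha2⟩, ⟨b, hb1, hb2⟩⟩
  exact ⟨h a b, mem_map2C.mpr ⟨a, ha1, b, hb1, rfl⟩, mem_map2C.mpr ⟨a, ha2, b, hb2, rfl⟩⟩

/-- Binary map on the cohesive power. -/
def map2P (h : ℕ → ℕ → ℕ) (hh : Computable₂ h) (x y : CohPow C) : CohPow C := by
  refine Quotient.map₂ (fun φ ψ => map2C h hh φ ψ) ?_ x y
  intro a a' ha b b' hb
  exact mk_eq_iff.mp (map2C_congr (Quotient.sound ha) (Quotient.sound hb))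

lemma map2P_mk {h : ℕ → ℕ → ℕ} {hh : Computable₂ h} {φ ψ : CohCarrier C} :
    map2P h hh (CohPow.mk φ) (CohPow.mk ψ) = CohPow.mk (map2C h hh φ ψ) := rfl

lemma lt_map2_right_self {p q : ℕ → ℕ → Prop} {h : ℕ → ℕ → ℕ} {hh : Computable₂ h}
    {x y : CohPow C} (hpq : ∀ a b, p a b → q a (h a b)) (hp : CohPow.Lt C p x y) :
    CohPow.Lt C q x (map2P h hh x y) := by
  obtain ⟨φ, rfl⟩ := exists_mk x
  obtain ⟨ψ, rfl⟩ := exists_mk y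
  rw [lt_mk_iff] at hp
  rw [map2P_mk, lt_mk_iff]
  refine AEC.mono hp ?_
  rintro n ⟨a, b, ha, hb, hab⟩
  exact ⟨a, h a b, ha, mem_map2C.mpr ⟨a, ha, b, hb, rfl⟩, hpq a b hab⟩

lemma lt_map2_left_self {p q : ℕ → ℕ → Prop} {h : ℕ → ℕ → ℕ} {hh : Computable₂ h}
    {x y : CohPow C} (hpq : ∀ a b, p a b → q (h a b) b) (hp : CohPow.Lt C p x y) :
    CohPow.Lt C q (map2P h hh x y) y := by
  obtain ⟨φ, rfl⟩ := exists_mk x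
  obtain ⟨ψ, rfl⟩ := exists_mk y
  rw [lt_mk_iff] at hp
  rw [map2P_mk, lt_mk_iff]
  refine AEC.mono hp ?_
  rintro n ⟨a, b, ha, hb, hab⟩
  exact ⟨h a b, b, mem_map2C.mpr ⟨a, ha, b, hb, rfl⟩, hb, hpq a b hab⟩

-- arithmetic elements
/-- `x + j`. -/
def addE (x : CohPow C) (j : ℕ) : CohPow C := mapP (· + j) (cAdd j) x

/-- `x - j` (truncated). -/
def subE (x : CohPow C) (j : ℕ) : CohPow C := mapP (· - j) (cSub j) x

/-- `⌊x/2⌋`. -/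
def halfE (x : CohPow C) : CohPow C := mapP (· / 2) cHalf x

/-- `2x`. -/
def dblE (x : CohPow C) : CohPow C := mapP (2 * ·) cDbl x

/-- `⌊(x+y)/2⌋`. -/
def avgE (x y : CohPow C) : CohPow C := map2P (fun a b => (a + b) / 2) cAvg x y

lemma lt_diag (x : CohPow C) : CohPow.Lt C (fun a b => a = b) x x := eq_iff_ltEq.mp rfl

lemma lt_addE_left {p : ℕ → ℕ → Prop} {x y : CohPow C} {j : ℕ} :
    CohPow.Lt C p (addE x j) y ↔ CohPow.Lt C (fun a b => p (a + j) b) x y := lt_map_left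

lemma lt_addE_right {p : ℕ → ℕ → Prop} {x y : CohPow C} {j : ℕ} :
    CohPow.Lt C p x (addE y j) ↔ CohPow.Lt C (fun a b => p a (b + j)) x y := lt_map_right

lemma lt_subE_left {p : ℕ → ℕ → Prop} {x y : CohPow C} {j : ℕ} :
    CohPow.Lt C p (subE x j) y ↔ CohPow.Lt C (fun a b => p (a - j) b) x y := lt_map_left

lemma lt_subE_right {p : ℕ → ℕ → Prop} {x y : CohPow C} {j : ℕ} :
    CohPow.Lt C p x (subE y j) ↔ CohPow.Lt C (fun a b => p a (b - j)) x y := lt_map_right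

lemma addE_zero (x : CohPow C) : addE x 0 = x := by
  rw [eq_iff_ltEq, lt_addE_left]
  exact lt_mono (fun a b h => by omega) (lt_diag x)

lemma addE_addE (x : CohPow C) (i j : ℕ) : addE (addE x i) j = addE x (i + j) := by
  rw [eq_iff_ltEq, lt_addE_left, lt_addE_left, lt_addE_right]
  exact lt_mono (fun a b h => by omega) (lt_diag x)

lemma addE_lt_addE {x : CohPow C} {i j : ℕ} (hij : i < j) :
    CohPow.Lt C (· < ·) (addE x i) (addE x j) := by
  rw [lt_addE_left, lt_addE_right]
  exact lt_mono (fun a b h => by omega) (lt_diag x)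

lemma addE_cancel {x y : CohPow C} {j : ℕ} (h : addE x j = addE y j) : x = y := by
  rw [eq_iff_ltEq, lt_addE_left, lt_addE_right] at h
  rw [eq_iff_ltEq]
  exact lt_mono (fun a b h => by omega) h

-- order properties
lemma lc_irrefl (hC : Cohesive C) (x : CohPow C) : ¬ CohPow.Lt C (· < ·) x x := by
  intro h
  obtain ⟨a, b, h1, h2⟩ := lt_exists hC (lt_and h (lt_diag x))
  omega

lemma lc_trans {x y z : CohPow C} (h1 : CohPow.Lt C (· < ·) x y)
    (h2 : CohPow.Lt C (· < ·) y z) : CohPow.Lt C (· < ·) x z :=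
  lt_mono (fun a b h => by omega) (lt_comp h1 h2)

lemma lc_asymm (hC : Cohesive C) {x y : CohPow C} (h1 : CohPow.Lt C (· < ·) x y)
    (h2 : CohPow.Lt C (· < ·) y x) : False :=
  lc_irrefl hC x (lc_trans h1 h2)

lemma lc_trichotomy (hC : Cohesive C) (x y : CohPow C) :
    CohPow.Lt C (· < ·) x y ∨ x = y ∨ CohPow.Lt C (· < ·) y x := by
  rcases lt_dec hC x y _ cdec_lt with h | h
  · exact Or.inl (lt_mono (fun a b hab => by simpa using hab) h)
  · rcases lt_dec hC x y _ cdec_eq with h' | h'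
    · refine Or.inr (Or.inl ?_)
      rw [eq_iff_ltEq]
      exact lt_mono (fun a b hab => by simpa using hab) h'
    · refine Or.inr (Or.inr ?_)
      rw [lt_flip]
      refine lt_mono (fun a b hab => ?_) (lt_and h h')
      simp only [decide_eq_false_iff_not] at hab
      omega

lemma not_lc_iff (hC : Cohesive C) {x y : CohPow C} :
    ¬ CohPow.Lt C (· < ·) x y ↔ CohPow.Lt C (fun a b => b ≤ a) x y := by
  constructor
  · intro h
    rcases lc_trichotomy hC x y with h' | h' | h'
    · exact absurd h' h
    · subst h'; exact lt_mono (fun a b h => by omega) (lt_diag x)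
    · exact lt_flip.mpr (lt_mono (fun a b h => by omega) h')
  · intro h h'
    obtain ⟨a, b, h1, h2⟩ := lt_exists hC (lt_and h' h)
    omega

lemma const_lt_iff (hC : Cohesive C) {p : ℕ → ℕ → Prop} {k l : ℕ} :
    CohPow.Lt C p (constElt C k) (constElt C l) ↔ p k l := by
  constructor
  · intro h
    rw [constElt_eq, constElt_eq, lt_mk_iff] at h
    obtain ⟨n, _, a, b, ha, hb, hp⟩ := AEC.exists hC h
    obtain rfl := Part.mem_some_iff.mp ha
    obtain rfl := Part.mem_some_iff.mp hb
    exact hp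
  · intro h
    rw [constElt_eq, constElt_eq, lt_mk_iff]
    exact AEC.of_all fun n => ⟨k, l, Part.mem_some k, Part.mem_some l, h⟩

end CohAux4
section CohAux5

open Part

variable {C : Set ℕ}

lemma lt_top (x y : CohPow C) : CohPow.Lt C (fun _ _ => True) x y :=
  lt_of_all (fun _ _ => trivial) x y

lemma uv_flip {p : ℕ → Prop} {x : CohPow C} :
    CohPow.Lt C (fun a _ => p a) x x ↔ CohPow.Lt C (fun _ b => p b) x x := lt_flip

lemma uv_of_left {p : ℕ → Prop} {x y : CohPow C} (h : CohPow.Lt C (fun a _ => p a) x y) :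
    CohPow.Lt C (fun a _ => p a) x x :=
  lt_mono (fun a _ h => h.choose_spec.1) (lt_comp h (lt_top y x))

lemma uv_of_right {p : ℕ → Prop} {x y : CohPow C} (h : CohPow.Lt C (fun _ b => p b) x y) :
    CohPow.Lt C (fun a _ => p a) y y :=
  uv_flip.mpr (lt_mono (fun a _ h => h.choose_spec.2) (lt_comp (lt_top y x) h))

/-- `x` is nonstandard: all of its values are almost everywhere above any constant. -/
def Nstd (C : Set ℕ) (x : CohPow C) : Prop :=
  ∀ k, CohPow.Lt C (fun a _ => k < a) x x

lemma nstd_iff_const_lt (x : CohPow C) :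
    Nstd C x ↔ ∀ k, CohPow.Lt C (· < ·) (constElt C k) x := by
  constructor
  · intro h k
    exact lt_const_left.mpr (uv_flip.mp (h k))
  · intro h k
    exact uv_flip.mpr (lt_const_left.mp (h k))

lemma std_or_nstd (hC : Cohesive C) (x : CohPow C) :
    (∃ j, x = constElt C j) ∨ Nstd C x := by
  by_cases hstd : ∃ j, x = constElt C j
  · exact Or.inl hstd
  · refine Or.inr fun k => ?_
    have key : ∀ j, CohPow.Lt C (fun a _ => a ≠ j) x x := by
      intro j
      rcases lt_dec hC x (constElt C j) _ cdec_eq with h | h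
      · exfalso
        refine hstd ⟨j, ?_⟩
        rw [eq_iff_ltEq]
        exact lt_mono (fun a b hab => by simpa using hab) h
      · exact uv_of_left (lt_const_right.mp
          (lt_mono (fun a b hab => by simpa using hab) h))
    have := lt_finsetAll (Finset.range (k + 1)) (fun j _ => key j)
    refine lt_mono (fun a b hab => ?_) this
    by_contra hak
    exact hab a (Finset.mem_range.mpr (by omega)) rfl

lemma nstd_not_const (hC : Cohesive C) {x : CohPow C} (h : Nstd C x) (j : ℕ) :
    x ≠ constElt C j := by
  rintro rfl
  exact absurd (const_lt_iff hC |>.mp ((nstd_iff_const_lt _).mp h j)) (lt_irrefl j)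

lemma bounded_std (hC : Cohesive C) {x : CohPow C} {k : ℕ}
    (h : CohPow.Lt C (fun a _ => a ≤ k) x x) : ∃ j, x = constElt C j := by
  rcases std_or_nstd hC x with h' | h'
  · exact h'
  · obtain ⟨a, b, h1, h2⟩ := lt_exists hC (lt_and h (h' k))
    omega

lemma nstd_of_lt {x y : CohPow C} (hx : Nstd C x) (hxy : CohPow.Lt C (· < ·) x y) :
    Nstd C y := fun k =>
  uv_of_right (lt_mono (fun _ c h => by obtain ⟨b, h1, h2⟩ := h; omega)
    (lt_comp (uv_flip.mp (hx k)) hxy))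

lemma nstd_addE {x : CohPow C} (h : Nstd C x) (j : ℕ) : Nstd C (addE x j) := by
  intro k
  rw [lt_addE_left, lt_addE_right]
  exact lt_mono (fun a b hab => by omega) (h k)

lemma nstd_subE {x : CohPow C} (h : Nstd C x) (j : ℕ) : Nstd C (subE x j) := by
  intro k
  rw [lt_subE_left, lt_subE_right]
  exact lt_mono (fun a b hab => by omega) (h (k + j))

lemma subE_addE (x : CohPow C) (j : ℕ) : subE (addE x j) j = x := by
  rw [eq_iff_ltEq, lt_subE_left, lt_addE_left]
  exact lt_mono (fun a b h => by omega) (lt_diag x)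

lemma addE_subE {x : CohPow C} (h : Nstd C x) (j : ℕ) : addE (subE x j) j = x := by
  rw [eq_iff_ltEq, lt_addE_left, lt_subE_left]
  exact lt_mono (fun a b hab => by omega) (lt_and (lt_diag x) (h j))

lemma between (hC : Cohesive C) {x y : CohPow C} {m : ℕ}
    (h : CohPow.Lt C (fun a b => a ≤ b ∧ b ≤ a + m) x y) : ∃ j ≤ m, y = addE x j := by
  by_contra hno
  push_neg at hno
  have key : ∀ j ≤ m, CohPow.Lt C (fun a b => b ≠ a + j) x y := by
    intro j hj
    rcases lt_dec hC x y _ (cdec_eq_add j) with h' | h'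
    · exfalso
      refine hno j hj ?_
      rw [eq_iff_ltEq, lt_addE_right]
      exact lt_mono (fun a b hab => by simpa using hab) (lt_flip.mp h')
    · exact lt_mono (fun a b hab => by simpa using hab) h'
  have hall := lt_finsetAll (Finset.range (m + 1))
    (fun j hj => key j (Nat.lt_succ_iff.mp (Finset.mem_range.mp hj)))
  obtain ⟨a, b, hab⟩ := lt_exists hC (lt_and h hall)
  exact absurd (hab.2 (b - a) (Finset.mem_range.mpr (by omega))) (by omega)

/-- Finite distance. -/
def FinDiff (x y : CohPow C) : Prop := ∃ j, y = addE x j ∨ x = addE y j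

lemma finDiff_refl (x : CohPow C) : FinDiff x x := ⟨0, Or.inl (addE_zero x).symm⟩

lemma finDiff_symm {x y : CohPow C} (h : FinDiff x y) : FinDiff y x := by
  obtain ⟨j, h | h⟩ := h
  exacts [⟨j, Or.inr h⟩, ⟨j, Or.inl h⟩]

lemma finDiff_addE (x : CohPow C) (j : ℕ) : FinDiff x (addE x j) := ⟨j, Or.inl rfl⟩

lemma finDiff_of_addE_eq {x y : CohPow C} {i j : ℕ} (h : addE x i = addE y j) :
    FinDiff x y := by
  rcases le_total i j with hij | hij
  · refine ⟨j - i, Or.inr ?_⟩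
    have : addE (addE y (j - i)) i = addE x i := by
      rw [addE_addE, show j - i + i = j by omega, h]
    exact (addE_cancel this).symm
  · refine ⟨i - j, Or.inl ?_⟩
    have : addE (addE x (i - j)) j = addE y j := by
      rw [addE_addE, show i - j + j = i by omega, h]
    exact (addE_cancel this).symm

lemma finDiff_trans {x y z : CohPow C} (h1 : FinDiff x y) (h2 : FinDiff y z) :
    FinDiff x z := by
  obtain ⟨i, hi | hi⟩ := h1 <;> obtain ⟨j, hj | hj⟩ := h2
  · refine ⟨i + j, Or.inl ?_⟩
    rw [← addE_addE, ← hi, hj]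
  · refine finDiff_of_addE_eq (i := i) (j := j) ?_
    rw [← hi, ← hj]
  · refine finDiff_of_addE_eq (i := j) (j := i) ?_
    rw [hi, hj, addE_addE, addE_addE, Nat.add_comm i j]
  · refine ⟨j + i, Or.inr ?_⟩
    rw [← addE_addE, ← hj, hi]

lemma gap (hC : Cohesive C) {x y : CohPow C} (hxy : CohPow.Lt C (· < ·) x y)
    (hfd : ¬ FinDiff x y) (j : ℕ) : CohPow.Lt C (· < ·) (addE x j) y := by
  rcases lc_trichotomy hC (addE x j) y with h | h | h
  · exact h
  · exact absurd ⟨j, Or.inl h.symm⟩ hfd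
  · exfalso
    have h1 : CohPow.Lt C (fun a b => b < a + j) x y :=
      lt_flip.mpr (lt_addE_right.mp h)
    have h2 : CohPow.Lt C (fun a b => a ≤ b ∧ b ≤ a + j) x y :=
      lt_and (lt_mono (fun a b hh => by omega) hxy)
        (lt_mono (fun a b hh => by omega) h1)
    obtain ⟨i, _, hi⟩ := between hC h2
    exact hfd ⟨i, Or.inl hi⟩

end CohAux5
section CohAux6

open Part

variable {C : Set ℕ}

lemma lt_addE_pos {x : CohPow C} {j : ℕ} (hj : 0 < j) :
    CohPow.Lt C (· < ·) x (addE x j) := by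
  have := addE_lt_addE (x := x) (i := 0) (j := j) hj
  rwa [addE_zero] at this

lemma not_finDiff_of_gap (hC : Cohesive C) {x y : CohPow C}
    (h : ∀ j, CohPow.Lt C (· < ·) (addE x j) y) : ¬ FinDiff x y := by
  rintro ⟨j, hj | hj⟩
  · exact lc_irrefl hC y (hj ▸ h j)
  · have hxy : CohPow.Lt C (· < ·) x y := by
      have := h 0; rwa [addE_zero] at this
    rcases Nat.eq_zero_or_pos j with rfl | hp
    · rw [addE_zero] at hj
      exact lc_irrefl hC x (hj ▸ hxy)
    · exact lc_asymm hC hxy (hj ▸ lt_addE_pos hp)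

lemma gap' (hC : Cohesive C) {x y : CohPow C} (hxy : CohPow.Lt C (· < ·) x y)
    (hfd : ¬ FinDiff x y) (j : ℕ) : CohPow.Lt C (fun a b => a + j < b) x y :=
  lt_addE_left.mp (gap hC hxy hfd j)

-- averages
lemma avg_facts (hC : Cohesive C) {x y : CohPow C} (hxy : CohPow.Lt C (· < ·) x y)
    (hfd : ¬ FinDiff x y) (j : ℕ) :
    CohPow.Lt C (· < ·) (addE x j) (avgE x y) ∧
    CohPow.Lt C (· < ·) (addE (avgE x y) j) y := by
  constructor
  · rw [lt_addE_left]
    exact lt_map2_right_self (fun a b hab => by omega) (gap' hC hxy hfd (2 * j + 2))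
  · rw [lt_addE_left]
    exact lt_map2_left_self (fun a b hab => by omega) (gap' hC hxy hfd (2 * j + 2))

-- countability
lemma countable_carrier : Countable (CohCarrier C) := by
  have h : ∀ φ : CohCarrier C, ∃ c : Nat.Partrec.Code, c.eval = φ.1 := fun φ =>
    Nat.Partrec.Code.exists_code.mp (Partrec.nat_iff.mp φ.2.1)
  choose f hf using h
  have hinj : Function.Injective f := by
    intro φ ψ he
    apply Subtype.ext
    rw [← hf φ, ← hf ψ, he]
  exact hinj.countable

instance : Countable (CohPow C) := by
  have := countable_carrier (C := C)
  exact Quotient.countable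

-- nonstandard part
/-- The nonstandard part of the cohesive power. -/
def NSpart (C : Set ℕ) : Type := {x : CohPow C // Nstd C x}

instance : Countable (NSpart C) := Subtype.countable

/-- Finite-difference setoid on the nonstandard part. -/
def nsSetoid (C : Set ℕ) : Setoid (NSpart C) where
  r x y := FinDiff x.1 y.1
  iseqv := ⟨fun x => finDiff_refl x.1, finDiff_symm, finDiff_trans⟩

/-- The quotient of the nonstandard part by finite difference. -/
def QT (C : Set ℕ) : Type := Quotient (nsSetoid C)

instance : Countable (QT C) := Quotient.countable

/-- The order on the quotient. -/
def QLt (u v : QT C) : Prop :=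
  ∃ x y : NSpart C, u = Quotient.mk (nsSetoid C) x ∧ v = Quotient.mk (nsSetoid C) y ∧
    CohPow.Lt C (· < ·) x.1 y.1 ∧ ¬ FinDiff x.1 y.1

lemma lt_of_finDiff_lt (hC : Cohesive C) {x x' y : CohPow C} (hd : FinDiff x x')
    (hxy : CohPow.Lt C (· < ·) x y) (hfd : ¬ FinDiff x y) :
    CohPow.Lt C (· < ·) x' y := by
  obtain ⟨j, hj | hj⟩ := hd
  · exact hj ▸ gap hC hxy hfd j
  · rcases Nat.eq_zero_or_pos j with rfl | hp
    · rw [addE_zero] at hj; exact hj ▸ hxy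
    · exact lc_trans (hj ▸ lt_addE_pos hp) hxy

lemma lt_of_lt_finDiff (hC : Cohesive C) {x y y' : CohPow C} (hd : FinDiff y y')
    (hxy : CohPow.Lt C (· < ·) x y) (hfd : ¬ FinDiff x y) :
    CohPow.Lt C (· < ·) x y' := by
  obtain ⟨j, hj | hj⟩ := hd
  · rcases Nat.eq_zero_or_pos j with rfl | hp
    · rw [addE_zero] at hj; exact hj ▸ hxy
    · exact lc_trans hxy (hj ▸ lt_addE_pos hp)
  · -- y = addE y' j
    rcases lc_trichotomy hC x y' with h | h | h
    · exact h
    · exfalso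
      apply hfd
      rw [h, hj]
      exact finDiff_addE y' j
    · exfalso
      -- y' < x and x < y = y' + j, so x is between y' and y' + j
      have h1 : CohPow.Lt C (fun a b => b < a + j) y' x := by
        have : CohPow.Lt C (· < ·) x (addE y' j) := hj ▸ hxy
        exact lt_flip.mpr (lt_addE_right.mp this)
      have h2 : CohPow.Lt C (fun a b => a ≤ b ∧ b ≤ a + j) y' x :=
        lt_and (lt_mono (fun a b hh => by omega) h) (lt_mono (fun a b hh => by omega) h1)
      obtain ⟨i, _, hi⟩ := between hC h2
      exact hfd (finDiff_trans (finDiff_symm ⟨i, Or.inl hi⟩) ⟨j, Or.inl hj⟩)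

lemma qlt_mk_iff (hC : Cohesive C) {x y : NSpart C} :
    QLt (Quotient.mk (nsSetoid C) x) (Quotient.mk (nsSetoid C) y) ↔
      CohPow.Lt C (· < ·) x.1 y.1 ∧ ¬ FinDiff x.1 y.1 := by
  constructor
  · rintro ⟨x', y', hx, hy, hlt, hfd⟩
    have hdx : FinDiff x'.1 x.1 := Quotient.exact hx.symm
    have hdy : FinDiff y'.1 y.1 := Quotient.exact hy.symm
    have hfd' : ¬ FinDiff x.1 y.1 := fun h =>
      hfd (finDiff_trans (finDiff_trans hdx h) (finDiff_symm hdy))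
    have h1 : CohPow.Lt C (· < ·) x.1 y'.1 := lt_of_finDiff_lt hC hdx hlt hfd
    have hfd1 : ¬ FinDiff x.1 y'.1 := fun h => hfd (finDiff_trans hdx h)
    exact ⟨lt_of_lt_finDiff hC hdy h1 hfd1, hfd'⟩
  · rintro ⟨hlt, hfd⟩
    exact ⟨x, y, rfl, rfl, hlt, hfd⟩

lemma qt_exists_mk (u : QT C) : ∃ x : NSpart C, u = Quotient.mk (nsSetoid C) x :=
  ⟨Quotient.out u, (Quotient.out_eq u).symm⟩

lemma qlt_irrefl (hC : Cohesive C) (u : QT C) : ¬ QLt u u := by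
  obtain ⟨x, rfl⟩ := qt_exists_mk u
  rw [qlt_mk_iff hC]
  rintro ⟨-, hfd⟩
  exact hfd (finDiff_refl x.1)

lemma qlt_trans (hC : Cohesive C) {u v w : QT C} (h1 : QLt u v) (h2 : QLt v w) :
    QLt u w := by
  obtain ⟨x, rfl⟩ := qt_exists_mk u
  obtain ⟨y, rfl⟩ := qt_exists_mk v
  obtain ⟨z, rfl⟩ := qt_exists_mk w
  rw [qlt_mk_iff hC] at h1 h2 ⊢
  obtain ⟨hxy, hfdxy⟩ := h1
  obtain ⟨hyz, hfdyz⟩ := h2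
  refine ⟨lc_trans hxy hyz, ?_⟩
  rintro ⟨j, hj | hj⟩
  · -- z = x + j : y is between x and x + j
    have h1' : CohPow.Lt C (fun a b => b < a + j) x.1 y.1 := by
      have : CohPow.Lt C (· < ·) y.1 (addE x.1 j) := hj ▸ hyz
      exact lt_flip.mpr (lt_addE_right.mp this)
    have h2' : CohPow.Lt C (fun a b => a ≤ b ∧ b ≤ a + j) x.1 y.1 :=
      lt_and (lt_mono (fun a b hh => by omega) hxy) (lt_mono (fun a b hh => by omega) h1')
    obtain ⟨i, _, hi⟩ := between hC h2'
    exact hfdxy (hi ▸ finDiff_addE x.1 i)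
  · -- x = z + j : z ≤ x, but x < z
    have hxz := lc_trans hxy hyz
    rcases Nat.eq_zero_or_pos j with rfl | hp
    · rw [addE_zero] at hj
      exact lc_irrefl hC x.1 (hj ▸ hxz)
    · exact lc_asymm hC hxz (hj ▸ lt_addE_pos hp)

lemma qlt_trichotomy (hC : Cohesive C) (u v : QT C) : QLt u v ∨ u = v ∨ QLt v u := by
  obtain ⟨x, rfl⟩ := qt_exists_mk u
  obtain ⟨y, rfl⟩ := qt_exists_mk v
  rcases lc_trichotomy hC x.1 y.1 with h | h | h
  · by_cases hfd : FinDiff x.1 y.1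
    · exact Or.inr (Or.inl (Quotient.sound hfd))
    · exact Or.inl ((qlt_mk_iff hC).mpr ⟨h, hfd⟩)
  · have hd : FinDiff x.1 y.1 := h ▸ finDiff_refl x.1
    exact Or.inr (Or.inl (Quotient.sound hd))
  · by_cases hfd : FinDiff y.1 x.1
    · exact Or.inr (Or.inl (Quotient.sound (finDiff_symm hfd)))
    · exact Or.inr (Or.inr ((qlt_mk_iff hC).mpr ⟨h, hfd⟩))

lemma qlt_isSTO (hC : Cohesive C) : IsStrictTotalOrder (QT C) (QLt (C := C)) where
  trichotomous a b h1 h2 := by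
    rcases qlt_trichotomy hC a b with h | h | h
    exacts [absurd h h1, h, absurd h h2]
  irrefl := qlt_irrefl hC
  trans _ _ _ := qlt_trans hC

-- integer shifts
/-- Shift an element of the cohesive power by an integer. -/
def zshift (x : CohPow C) (z : ℤ) : CohPow C :=
  if 0 ≤ z then addE x z.toNat else subE x (-z).toNat

lemma zshift_strictMono (hC : Cohesive C) {x : CohPow C} (hx : Nstd C x) {z w : ℤ}
    (hzw : z < w) : CohPow.Lt C (· < ·) (zshift x z) (zshift x w) := by
  unfold zshift
  split_ifs with h1 h2 h2
  · exact addE_lt_addE (by omega)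
  · omega
  · -- z < 0 ≤ w : subE x (-z).toNat < addE x w.toNat
    rw [lt_subE_left, lt_addE_right]
    refine lt_mono (fun a b hh => by omega) (lt_and (lt_diag x) (hx 0))
  · -- both negative: -z > -w
    rw [lt_subE_left, lt_subE_right]
    have : ((-z).toNat : ℤ) = -z := by omega
    refine lt_mono (fun a b hh => ?_) (lt_and (lt_diag x) (hx ((-z).toNat)))
    obtain ⟨rfl, hlt⟩ := hh
    omega

lemma nstd_zshift {x : CohPow C} (hx : Nstd C x) (z : ℤ) : Nstd C (zshift x z) := by
  unfold zshift
  split_ifs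
  · exact nstd_addE hx _
  · exact nstd_subE hx _

lemma finDiff_zshift {x : CohPow C} (hx : Nstd C x) (z : ℤ) : FinDiff x (zshift x z) := by
  unfold zshift
  split_ifs
  · exact finDiff_addE x _
  · exact ⟨(-z).toNat, Or.inr (addE_subE hx _).symm⟩

lemma zshift_inj (hC : Cohesive C) {x : CohPow C} (hx : Nstd C x) {z w : ℤ}
    (h : zshift x z = zshift x w) : z = w := by
  rcases lt_trichotomy z w with hzw | hzw | hzw
  · exact absurd (h ▸ zshift_strictMono hC hx hzw) (lc_irrefl hC _)
  · exact hzw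
  · exact absurd (h ▸ zshift_strictMono hC hx hzw) (lc_irrefl hC _)

lemma zshift_exists (hC : Cohesive C) {x y : CohPow C} (hx : Nstd C x)
    (hd : FinDiff x y) : ∃ z : ℤ, y = zshift x z := by
  obtain ⟨j, hj | hj⟩ := hd
  · exact ⟨(j : ℤ), by simp [zshift, hj]⟩
  · refine ⟨-(j : ℤ), ?_⟩
    rcases Nat.eq_zero_or_pos j with rfl | hp
    · rw [addE_zero] at hj
      rw [hj]
      simp [zshift, addE_zero]
    · have hneg : ¬ (0 : ℤ) ≤ -(j : ℤ) := by omega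
      rw [zshift, if_neg hneg]
      have : subE x j = y := by rw [hj, subE_addE]
      simpa using this.symm
end CohAux6
section CohAux7

open Part

variable {C : Set ℕ}

lemma qt_dense (hC : Cohesive C) (u v : QT C) (huv : QLt u v) :
    ∃ w, QLt u w ∧ QLt w v := by
  obtain ⟨x, rfl⟩ := qt_exists_mk u
  obtain ⟨y, rfl⟩ := qt_exists_mk v
  rw [qlt_mk_iff hC] at huv
  obtain ⟨hlt, hfd⟩ := huv
  set m := avgE x.1 y.1 with hm
  have h1 : ∀ j, CohPow.Lt C (· < ·) (addE x.1 j) m := fun j => (avg_facts hC hlt hfd j).1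
  have h2 : ∀ j, CohPow.Lt C (· < ·) (addE m j) y.1 := fun j => (avg_facts hC hlt hfd j).2
  have hxm : CohPow.Lt C (· < ·) x.1 m := by have := h1 0; rwa [addE_zero] at this
  have hmy : CohPow.Lt C (· < ·) m y.1 := by have := h2 0; rwa [addE_zero] at this
  have hnm : Nstd C m := nstd_of_lt x.2 hxm
  refine ⟨Quotient.mk (nsSetoid C) ⟨m, hnm⟩, ?_, ?_⟩
  · exact (qlt_mk_iff hC).mpr ⟨hxm, not_finDiff_of_gap hC h1⟩
  · exact (qlt_mk_iff hC).mpr ⟨hmy, not_finDiff_of_gap hC h2⟩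

lemma qt_noMax (hC : Cohesive C) (u : QT C) : ∃ v, QLt u v := by
  obtain ⟨x, rfl⟩ := qt_exists_mk u
  have hgap : ∀ j, CohPow.Lt C (· < ·) (addE x.1 j) (dblE x.1) := by
    intro j
    rw [lt_addE_left]
    show CohPow.Lt C _ x.1 (mapP _ _ x.1)
    rw [lt_map_right]
    exact lt_mono (fun a b hh => by obtain ⟨rfl, h⟩ := hh; omega)
      (lt_and (lt_diag x.1) (x.2 j))
  have hlt : CohPow.Lt C (· < ·) x.1 (dblE x.1) := by
    have := hgap 0; rwa [addE_zero] at this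
  refine ⟨Quotient.mk (nsSetoid C) ⟨dblE x.1, nstd_of_lt x.2 hlt⟩, ?_⟩
  exact (qlt_mk_iff hC).mpr ⟨hlt, not_finDiff_of_gap hC hgap⟩

lemma qt_noMin (hC : Cohesive C) (u : QT C) : ∃ v, QLt v u := by
  obtain ⟨x, rfl⟩ := qt_exists_mk u
  have hgap : ∀ j, CohPow.Lt C (· < ·) (addE (halfE x.1) j) x.1 := by
    intro j
    rw [lt_addE_left]
    show CohPow.Lt C _ (mapP _ _ x.1) x.1
    rw [lt_map_left]
    exact lt_mono (fun a b hh => by obtain ⟨rfl, h⟩ := hh; omega)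
      (lt_and (lt_diag x.1) (x.2 (2 * j + 1)))
  have hlt : CohPow.Lt C (· < ·) (halfE x.1) x.1 := by
    have := hgap 0; rwa [addE_zero] at this
  have hnh : Nstd C (halfE x.1) := by
    intro k
    show CohPow.Lt C _ (mapP _ _ x.1) (mapP _ _ x.1)
    rw [lt_map_left, lt_map_right]
    exact lt_mono (fun a b hh => by omega) (x.2 (2 * k + 1))
  refine ⟨Quotient.mk (nsSetoid C) ⟨halfE x.1, hnh⟩, ?_⟩
  exact (qlt_mk_iff hC).mpr ⟨hlt, not_finDiff_of_gap hC hgap⟩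

/-- The carrier of the identity function. -/
def idC (C : Set ℕ) : CohCarrier C :=
  ⟨fun n => Part.some n, Partrec.some, by
    have : (PFun.Dom fun n : ℕ => Part.some n) = Set.univ := by
      ext n; simp [PFun.Dom]
    rw [this, Set.diff_univ]; exact Set.finite_empty⟩

lemma idElt_eq : idElt C = CohPow.mk (idC C) := rfl

lemma idElt_nstd : Nstd C (idElt C) := by
  intro k
  rw [idElt_eq, lt_mk_iff]
  refine (Set.finite_Iic k).subset fun n hn => ?_
  simp only [Set.mem_diff, Set.mem_setOf_eq] at hn
  rw [Set.mem_Iic]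
  by_contra hk
  exact hn.2 ⟨n, n, Part.mem_some n, Part.mem_some n, by omega⟩

end CohAux7
section CohAux8

open Part

variable {C : Set ℕ}

lemma const_inj (hC : Cohesive C) {j k : ℕ} (h : constElt C j = constElt C k) : j = k := by
  rw [eq_iff_ltEq] at h
  exact const_lt_iff hC |>.mp h

lemma nstd_not_lt_const (hC : Cohesive C) {x : CohPow C} (hx : Nstd C x) (k : ℕ) :
    ¬ CohPow.Lt C (· < ·) x (constElt C k) := by
  intro h
  obtain ⟨a, b, h1, h2⟩ := lt_exists hC (lt_and (lt_const_right.mp h) (hx k))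
  omega

theorem core_iso (hC : Cohesive C) :
    Nonempty (CohPow.Lt C (· < ·) ≃r NQZlt) := by
  classical
  haveI hSTO : IsStrictTotalOrder (QT C) QLt := qlt_isSTO hC
  letI : LinearOrder (QT C) := linearOrderOfSTO QLt
  haveI : DenselyOrdered (QT C) := ⟨fun u v h => qt_dense hC u v h⟩
  haveI : NoMaxOrder (QT C) := ⟨fun u => qt_noMax hC u⟩
  haveI : NoMinOrder (QT C) := ⟨fun u => qt_noMin hC u⟩
  haveI : Nonempty (QT C) := ⟨Quotient.mk (nsSetoid C) ⟨idElt C, idElt_nstd⟩⟩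
  obtain ⟨eQ⟩ : Nonempty (QT C ≃o ℚ) := Order.iso_of_countable_dense (QT C) ℚ
  -- base points and offsets
  have hbse_n : ∀ u : QT C, Nstd C (Quotient.out u).1 := fun u => (Quotient.out u).2
  have hbse_class : ∀ x : NSpart C,
      FinDiff (Quotient.out (Quotient.mk (nsSetoid C) x)).1 x.1 := fun x =>
    Quotient.exact (Quotient.out_eq (Quotient.mk (nsSetoid C) x))
  have hoff : ∀ x : NSpart C,
      ∃ z : ℤ, x.1 = zshift (Quotient.out (Quotient.mk (nsSetoid C) x)).1 z :=
    fun x => zshift_exists hC (hbse_n _) (hbse_class x)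
  choose off hoffspec using hoff
  have hstd : ∀ x : CohPow C, ¬ Nstd C x → ∃ j, x = constElt C j := by
    intro x hx
    rcases std_or_nstd hC x with h | h
    · exact h
    · exact absurd h hx
  choose cidx hcidx using hstd
  set f : CohPow C → ℕ ⊕ ℚ × ℤ := fun x =>
    if h : Nstd C x then Sum.inr (eQ (Quotient.mk (nsSetoid C) ⟨x, h⟩), off ⟨x, h⟩)
    else Sum.inl (cidx x h) with hf
  -- the key comparison for nonstandard elements
  have key : ∀ x y : NSpart C, CohPow.Lt C (· < ·) x.1 y.1 ↔
      (QLt (Quotient.mk (nsSetoid C) x) (Quotient.mk (nsSetoid C) y) ∨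
       (Quotient.mk (nsSetoid C) x = Quotient.mk (nsSetoid C) y ∧ off x < off y)) := by
    intro x y
    constructor
    · intro hlt
      by_cases hfd : FinDiff x.1 y.1
      · right
        have hq : Quotient.mk (nsSetoid C) x = Quotient.mk (nsSetoid C) y :=
          Quotient.sound hfd
        refine ⟨hq, ?_⟩
        have h1 := hoffspec x
        have h2 := hoffspec y
        rw [hq] at h1
        rcases lt_trichotomy (off x) (off y) with h | h | h
        · exact h
        · exfalso
          rw [h, ← h2] at h1
          exact lc_irrefl hC x.1 (h1 ▸ hlt)
        · exfalso
          have := zshift_strictMono hC (hbse_n (Quotient.mk (nsSetoid C) y)) h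
          rw [← h1, ← h2] at this
          exact lc_asymm hC hlt this
      · exact Or.inl ((qlt_mk_iff hC).mpr ⟨hlt, hfd⟩)
    · rintro (hq | ⟨hq, hz⟩)
      · exact ((qlt_mk_iff hC).mp hq).1
      · have h1 := hoffspec x
        have h2 := hoffspec y
        rw [hq] at h1
        rw [h1, h2]
        exact zshift_strictMono hC (hbse_n _) hz
  -- injectivity
  have finj : Function.Injective f := by
    intro x y hxy
    rw [hf] at hxy
    by_cases h1 : Nstd C x <;> by_cases h2 : Nstd C y <;>
      simp only [dif_pos, dif_neg, h1, h2, dite_true, dite_false] at hxy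
    · have hp := Sum.inr.inj hxy
      have he : eQ (Quotient.mk (nsSetoid C) ⟨x, h1⟩) = eQ (Quotient.mk (nsSetoid C) ⟨y, h2⟩) :=
        congrArg Prod.fst hp
      have ho : off ⟨x, h1⟩ = off ⟨y, h2⟩ := congrArg Prod.snd hp
      have hq := eQ.injective he
      have hx1 := hoffspec ⟨x, h1⟩
      have hy1 := hoffspec ⟨y, h2⟩
      rw [hq, ho] at hx1
      exact hx1.trans hy1.symm
    · exact absurd hxy (by simp)
    · exact absurd hxy (by simp)
    · have := Sum.inl.inj hxy
      rw [hcidx x h1, hcidx y h2, this]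
  -- surjectivity
  have fsurj : Function.Surjective f := by
    rintro (k | ⟨q, z⟩)
    · refine ⟨constElt C k, ?_⟩
      have hx : ¬ Nstd C (constElt C k) := fun h => nstd_not_const hC h k rfl
      rw [hf]
      simp only [dif_neg hx]
      have := hcidx (constElt C k) hx
      rw [const_inj hC this.symm]
    · set u := eQ.symm q with hu
      set x0 := Quotient.out u with hx0
      set xx := zshift x0.1 z with hxx
      have hn : Nstd C xx := nstd_zshift x0.2 z
      refine ⟨xx, ?_⟩
      have hclass : Quotient.mk (nsSetoid C) (⟨xx, hn⟩ : NSpart C) = u := by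
        conv_rhs => rw [← Quotient.out_eq u]
        exact Quotient.sound (finDiff_symm (finDiff_zshift x0.2 z))
      have hoffz : off ⟨xx, hn⟩ = z := by
        have h1 := hoffspec ⟨xx, hn⟩
        rw [hclass] at h1
        exact zshift_inj hC x0.2 (h1.symm.trans hxx)
      rw [hf]
      simp only [dif_pos hn, hclass, hoffz, hu]
      rw [OrderIso.apply_symm_apply]
  -- order preservation
  have forder : ∀ x y : CohPow C, NQZlt (f x) (f y) ↔ CohPow.Lt C (· < ·) x y := by
    intro x y
    rw [hf]
    by_cases h1 : Nstd C x <;> by_cases h2 : Nstd C y <;>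
      simp only [dif_pos, dif_neg, h1, h2, dite_true, dite_false]
    · -- both nonstandard
      rw [show NQZlt (Sum.inr (eQ (Quotient.mk (nsSetoid C) ⟨x, h1⟩), off ⟨x, h1⟩))
            (Sum.inr (eQ (Quotient.mk (nsSetoid C) ⟨y, h2⟩), off ⟨y, h2⟩)) ↔
          Prod.Lex (· < ·) (· < ·) (eQ (Quotient.mk (nsSetoid C) ⟨x, h1⟩), off ⟨x, h1⟩)
            (eQ (Quotient.mk (nsSetoid C) ⟨y, h2⟩), off ⟨y, h2⟩) from Sum.lex_inr_inr]
      rw [Prod.lex_def]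
      rw [key ⟨x, h1⟩ ⟨y, h2⟩]
      constructor
      · rintro (hlt | ⟨heq, hz⟩)
        · exact Or.inl (eQ.lt_iff_lt.mp hlt)
        · exact Or.inr ⟨eQ.injective heq, hz⟩
      · rintro (hlt | ⟨heq, hz⟩)
        · exact Or.inl (eQ.lt_iff_lt.mpr hlt)
        · exact Or.inr ⟨congrArg eQ heq, hz⟩
    · -- x nonstandard, y standard : both false
      refine iff_of_false (by simp [NQZlt]) ?_
      intro hlt
      rw [hcidx y h2] at hlt
      exact nstd_not_lt_const hC h1 _ hlt
    · -- x standard, y nonstandard : both true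
      refine iff_of_true (by exact Sum.Lex.sep _ _) ?_
      rw [hcidx x h1]
      exact (nstd_iff_const_lt y).mp h2 _
    · -- both standard
      rw [show NQZlt (Sum.inl (cidx x h1)) (Sum.inl (cidx y h2)) ↔
          cidx x h1 < cidx y h2 from Sum.lex_inl_inl]
      have hxy : CohPow.Lt C (· < ·) x y ↔ cidx x h1 < cidx y h2 := by
        conv_lhs => rw [hcidx x h1, hcidx y h2]
        exact const_lt_iff hC
      exact hxy.symm
  exact ⟨⟨Equiv.ofBijective f ⟨finj, fsurj⟩, fun {a b} => forder a b⟩⟩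

end CohAux8
/-- If `A` is a computable linear order of type ω with computable successor function,
then its cohesive power is isomorphic to `ℕ + ℚ ×ₗ ℤ`. -/
theorem cohesivePower_omega_computable_succ (C : Set ℕ) (hC : Cohesive C)
    (r : ℕ → ℕ → Prop) (hcomp : ComputableRel r) (hsto : IsStrictTotalOrder ℕ r)
    (homega : OrderTypeOmega r)
    (hsucc : ∃ S : ℕ → ℕ, Computable S ∧ ∀ n, ImmSucc r n (S n)) :
    Nonempty (CohPow.Lt C r ≃r NQZlt) := by
  classical
  obtain ⟨e⟩ := homega
  obtain ⟨S, hS, hImm⟩ := hsucc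
  -- the computable isomorphism g : (ℕ, <) → (ℕ, r)
  set g : ℕ → ℕ := fun k => Nat.rec (e.symm 0) (fun _ ih => S ih) k with hg
  have hgc : Computable g := by
    have h2 : Computable₂ fun (_ : ℕ) (p : ℕ × ℕ) => S p.2 :=
      hS.comp (Computable.snd.comp Computable.snd)
    exact (Computable.nat_rec Computable.id (Computable.const (e.symm 0)) h2).of_eq
      (fun n => by induction n with
        | zero => rfl
        | succ k ih => exact congrArg S ih)
  have hg_e : ∀ k, g k = e.symm k := by
    intro k
    induction k with
    | zero => rfl
    | succ k ih =>
      have h1 : g (k + 1) = S (g k) := rfl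
      rw [h1, ih]
      obtain ⟨hr, hmax⟩ := hImm (e.symm k)
      have hkm : k < e (S (e.symm k)) := by
        have := e.map_rel_iff.mpr hr
        rwa [e.apply_symm_apply] at this
      have hm1 : e (S (e.symm k)) ≤ k + 1 := by
        by_contra hgt
        push_neg at hgt
        have hz1 : r (e.symm k) (e.symm (k + 1)) := e.symm.map_rel_iff.mpr (by omega)
        have hz2 : r (e.symm (k + 1)) (S (e.symm k)) := by
          have : r (e.symm (k + 1)) (e.symm (e (S (e.symm k)))) :=
            e.symm.map_rel_iff.mpr (by omega)
          rwa [e.symm_apply_apply] at this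
        exact hmax (e.symm (k + 1)) ⟨hz1, hz2⟩
      have hmk : e (S (e.symm k)) = k + 1 := by omega
      rw [← hmk, e.symm_apply_apply]
  have hgr : ∀ a b : ℕ, a < b ↔ r (g a) (g b) := by
    intro a b
    rw [hg_e, hg_e]
    exact e.symm.map_rel_iff.symm
  have hgs : ∀ m, g (e m) = m := fun m => by rw [hg_e, e.symm_apply_apply]
  have hginj : Function.Injective g := by
    intro a b hab
    rw [hg_e, hg_e] at hab
    exact e.symm.injective hab
  -- partial computable inverse of g
  set ginv : ℕ →. ℕ := fun m => Nat.rfind fun k => Part.some (decide (g k = m)) with hgi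
  have hginv_pr : Partrec ginv := by
    have hc : Computable fun p : ℕ × ℕ => decide (g p.2 = p.1) :=
      (Primrec.eq (α := ℕ)).decide.to_comp.comp (hgc.comp Computable.snd) Computable.fst
    exact Partrec.rfind hc.partrec.to₂
  have hspec : ∀ m k, k ∈ ginv m → g k = m := by
    intro m k hk
    have := Nat.rfind_spec hk
    have h2 := Part.mem_some_iff.mp this
    exact of_decide_eq_true h2.symm
  have hdom : ∀ m, (ginv m).Dom := by
    intro m
    rw [hgi]
    refine Nat.rfind_dom.mpr ⟨e m, ?_, fun {_} _ => trivial⟩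
    exact Part.mem_some_iff.mpr (by simp [hgs m])
  -- transported carrier
  have hTc : ∀ φ : CohCarrier C, Partrec (fun n => (φ.1 n).bind ginv) ∧
      (C \ PFun.Dom fun n => (φ.1 n).bind ginv).Finite := by
    intro φ
    constructor
    · exact φ.2.1.bind (hginv_pr.comp Computable.snd).to₂
    · refine φ.2.2.subset fun n hn => ⟨hn.1, fun hd => hn.2 ?_⟩
      obtain ⟨a, ha⟩ := Part.dom_iff_mem.mp hd
      refine Part.dom_iff_mem.mpr ⟨(ginv a).get (hdom a), ?_⟩
      exact Part.mem_bind_iff.mpr ⟨a, ha, Part.get_mem (hdom a)⟩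
  set Tc : CohCarrier C → CohCarrier C :=
    fun φ => ⟨fun n => (φ.1 n).bind ginv, (hTc φ).1, (hTc φ).2⟩ with hTcdef
  have hmemT : ∀ (φ : CohCarrier C) n k, k ∈ (Tc φ).1 n ↔ ∃ a ∈ φ.1 n, k ∈ ginv a :=
    fun φ n k => Part.mem_bind_iff
  -- T respects the equivalence
  have hTcong : ∀ φ ψ : CohCarrier C, CohPow.mk φ = CohPow.mk ψ →
      CohPow.mk (Tc φ) = CohPow.mk (Tc ψ) := by
    intro φ ψ h
    rw [mk_eq_iff] at h ⊢
    refine h.mono fun n hn => ?_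
    obtain ⟨a, ha1, ha2⟩ := hn
    refine ⟨(ginv a).get (hdom a), ?_, ?_⟩
    · exact (hmemT φ n _).mpr ⟨a, ha1, Part.get_mem (hdom a)⟩
    · exact (hmemT ψ n _).mpr ⟨a, ha2, Part.get_mem (hdom a)⟩
  set T : CohPow C → CohPow C :=
    Quotient.map Tc (fun φ ψ h => mk_eq_iff.mp (hTcong φ ψ (Quotient.sound h))) with hT
  have hTmk : ∀ φ : CohCarrier C, T (CohPow.mk φ) = CohPow.mk (Tc φ) := fun _ => rfl
  set U : CohPow C → CohPow C := mapP g hgc with hU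
  -- U ∘ T = id
  have hUT : ∀ x : CohPow C, U (T x) = x := by
    intro x
    obtain ⟨φ, rfl⟩ := exists_mk x
    rw [hTmk, hU, mapP_mk, mk_eq_iff]
    refine (domAEC φ).mono fun n hn => ?_
    obtain ⟨a, ha⟩ := Part.dom_iff_mem.mp hn
    have hk : (ginv a).get (hdom a) ∈ (Tc φ).1 n :=
      (hmemT φ n _).mpr ⟨a, ha, Part.get_mem (hdom a)⟩
    have hga : g ((ginv a).get (hdom a)) = a := hspec a _ (Part.get_mem (hdom a))
    exact ⟨a, mem_mapC.mpr ⟨_, hk, hga⟩, ha⟩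
  -- T ∘ U = id
  have hTU : ∀ x : CohPow C, T (U x) = x := by
    intro x
    obtain ⟨φ, rfl⟩ := exists_mk x
    rw [hU, mapP_mk, hTmk, mk_eq_iff]
    refine (domAEC φ).mono fun n hn => ?_
    obtain ⟨a, ha⟩ := Part.dom_iff_mem.mp hn
    refine ⟨a, ?_, ha⟩
    refine (hmemT (mapC g hgc φ) n a).mpr ⟨g a, mem_mapC.mpr ⟨a, ha, rfl⟩, ?_⟩
    have hk := Part.get_mem (hdom (g a))
    have := hspec (g a) _ hk
    have ha' : (ginv (g a)).get (hdom (g a)) = a := hginj this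
    rwa [ha'] at hk
  -- order correspondence
  have horder : ∀ x y : CohPow C,
      CohPow.Lt C (· < ·) (T x) (T y) ↔ CohPow.Lt C r x y := by
    intro x y
    obtain ⟨φ, rfl⟩ := exists_mk x
    obtain ⟨ψ, rfl⟩ := exists_mk y
    rw [hTmk, hTmk, lt_mk_iff, lt_mk_iff]
    constructor
    · intro h
      refine AEC.mono h fun n hn => ?_
      obtain ⟨k, l, hk, hl, hkl⟩ := hn
      obtain ⟨a, ha, hka⟩ := (hmemT φ n k).mp hk
      obtain ⟨b, hb, hlb⟩ := (hmemT ψ n l).mp hl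
      refine ⟨a, b, ha, hb, ?_⟩
      rw [← hspec a k hka, ← hspec b l hlb]
      exact (hgr k l).mp hkl
    · intro h
      refine AEC.mono h fun n hn => ?_
      obtain ⟨a, b, ha, hb, hab⟩ := hn
      set k := (ginv a).get (hdom a) with hk
      set l := (ginv b).get (hdom b) with hl
      refine ⟨k, l, (hmemT φ n k).mpr ⟨a, ha, Part.get_mem _⟩,
        (hmemT ψ n l).mpr ⟨b, hb, Part.get_mem _⟩, ?_⟩
      show k < l
      rw [hgr k l, hspec a k (Part.get_mem _), hspec b l (Part.get_mem _)]
      exact hab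
  obtain ⟨F⟩ := core_iso hC
  refine ⟨RelIso.trans ⟨⟨T, U, hUT, hTU⟩, ?_⟩ F⟩
  intro a b
  exact horder a b
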